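/- arXiv:1003.5783 — 2 statements merged into one kernel-verified Lean document; each statement's English description precedes it below -/
import Mathlib

section
/- For every k ≥ 1, the complete graph K_{2k+1} on 2k+1 vertices satisfies r(K_{2k+1}) = k and ξ(K_{2k+1}) = k. -/
/-- A finite multigraph: finite vertex and edge types together with an incidence map
assigning to each edge an unordered pair of vertices. -/
structure Mgraph where
  V : Type
  E : Type
  [finV : Finite V]
  [finE : Finite E]
  inc : E → Sym2 V

attribute [instance] Mgraph.finV Mgraph.finE

namespace Mgraph

/-- A multigraph is loopless if no edge joins a vertex to itself. -/
def Loopless (G : Mgraph) : Prop := ∀ e : G.E, ¬ (G.inc e).IsDiag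

/-- The degree of a vertex: the number of edges incident with it. -/
noncomputable def degree (G : Mgraph) (v : G.V) : ℕ :=
  Nat.card {e : G.E // v ∈ G.inc e}

/-- The maximum degree Δ(G). -/
noncomputable def maxDegree (G : Mgraph) : ℕ :=
  sSup (Set.range G.degree)

/-- `G` is `s`-regular. -/
def Regular (G : Mgraph) (s : ℕ) : Prop := ∀ v : G.V, G.degree v = s

/-- A proper edge coloring with `k` colors: adjacent (distinct, sharing an endpoint)
edges receive different colors. -/
def IsProperEdgeColoring (G : Mgraph) {k : ℕ} (c : G.E → Fin k) : Prop :=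
  ∀ e f : G.E, e ≠ f → (∃ v : G.V, v ∈ G.inc e ∧ v ∈ G.inc f) → c e ≠ c f

/-- `G` admits a proper edge coloring with `k` colors. -/
def EdgeColorable (G : Mgraph) (k : ℕ) : Prop :=
  ∃ c : G.E → Fin k, G.IsProperEdgeColoring c

/-- The chromatic index χ'(G). -/
noncomputable def chromaticIndex (G : Mgraph) : ℕ :=
  sInf {k : ℕ | G.EdgeColorable k}

/-- `G` is class 1, i.e. χ'(G) = Δ(G). -/
noncomputable def ClassOne (G : Mgraph) : Prop := G.chromaticIndex = G.maxDegree

/-- Delete a set of edges from `G`. -/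
def deleteEdges (G : Mgraph) (S : Set G.E) : Mgraph where
  V := G.V
  E := {e : G.E // e ∉ S}
  inc e := G.inc e.1

/-- Delete a set of vertices from `G`, together with all incident edges. -/
def deleteVerts (G : Mgraph) (S : Set G.V) : Mgraph where
  V := {v : G.V // v ∉ S}
  E := {e : G.E // ∀ v : G.V, v ∈ G.inc e → v ∉ S}
  inc e := (G.inc e.1).pmap (fun v hv => ⟨v, hv⟩) e.2

/-- The simple graph on `V(G)` whose adjacency is realized by the edges in `F`. -/
def factorGraph (G : Mgraph) (F : Set G.E) : SimpleGraph G.V where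
  Adj u w := u ≠ w ∧ ∃ e ∈ F, G.inc e = s(u, w)
  symm := by
    constructor
    rintro u w ⟨hne, e, heF, he⟩
    exact ⟨hne.symm, e, heF, by rw [he]; exact Sym2.eq_swap⟩
  loopless := by constructor; rintro v ⟨hne, -⟩; exact hne rfl

/-- `G` is connected (in particular nonempty). -/
def Connected (G : Mgraph) : Prop := (G.factorGraph Set.univ).Connected

/-- `G` is 2-connected: it has at least 3 vertices and deleting any single vertex
leaves a connected graph. -/
def TwoConnected (G : Mgraph) : Prop :=
  3 ≤ Nat.card G.V ∧ ∀ v : G.V, (G.deleteVerts {v}).Connected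

/-- The number of odd cycles in the spanning subgraph of `G` with edge set `F`:
the number of connected components of odd cardinality. -/
noncomputable def oddCycles (G : Mgraph) (F : Set G.E) : ℕ :=
  Nat.card {C : (G.factorGraph F).ConnectedComponent //
    Odd (Nat.card {v : G.V // (G.factorGraph F).connectedComponentMk v = C})}

/-- `F` is a 1-factor (perfect matching): every vertex meets exactly one edge of `F`. -/
def IsOneFactor (G : Mgraph) (F : Set G.E) : Prop :=
  ∀ v : G.V, Nat.card {e : G.E // e ∈ F ∧ v ∈ G.inc e} = 1

/-- `F` is a 2-factor (spanning 2-regular subgraph): every vertex meets exactly two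
edges of `F`. -/
def IsTwoFactor (G : Mgraph) (F : Set G.E) : Prop :=
  ∀ v : G.V, Nat.card {e : G.E // e ∈ F ∧ v ∈ G.inc e} = 2

/-- `f` encodes a decomposition of the edge set of `G` into `n` 2-factors
(the fibers of `some i`), together with, possibly, one 1-factor (the fiber of `none`,
which is required to be empty when no 1-factor is used). -/
def IsDecomp (G : Mgraph) {n : ℕ} (f : G.E → Option (Fin n)) : Prop :=
  ((∀ e : G.E, f e ≠ none) ∨ G.IsOneFactor {e | f e = none}) ∧
    ∀ i : Fin n, G.IsTwoFactor {e | f e = some i}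

/-- The total number of odd cycles of the 2-factors of a decomposition. -/
noncomputable def decompOdd (G : Mgraph) {n : ℕ} (f : G.E → Option (Fin n)) : ℕ :=
  ∑ i : Fin n, G.oddCycles {e | f e = some i}

/-- The oddness ξ(G): the minimum total number of odd cycles over all decompositions of
the edge set into 2-factors (together with one 1-factor when the degree is odd);
`⊤` if no such decomposition exists. -/
noncomputable def oddness (G : Mgraph) : ℕ∞ :=
  sInf {k : ℕ∞ | ∃ (n : ℕ) (f : G.E → Option (Fin n)),
    G.IsDecomp f ∧ k = (G.decompOdd f : ℕ∞)}

/-- The minimum number of edges whose removal from `G` leaves a graph that is properly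
edge colorable with `D` colors. -/
noncomputable def resistanceTo (G : Mgraph) (D : ℕ) : ℕ :=
  sInf {k : ℕ | ∃ S : Set G.E, Nat.card S = k ∧ (G.deleteEdges S).EdgeColorable D}

/-- The resistance r(G): the minimum number of edges whose removal from `G` leaves a
Δ(G)-edge-colorable graph. -/
noncomputable def resistance (G : Mgraph) : ℕ := G.resistanceTo G.maxDegree

/-- The vertex resistance r_v(G): the minimum number of vertices whose removal from `G`
leaves a class 1 graph. -/
noncomputable def rv (G : Mgraph) : ℕ :=
  sInf {k : ℕ | ∃ S : Set G.V, Nat.card S = k ∧ (G.deleteVerts S).ClassOne}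

/-- The vertex resistance r'_v(G): the minimum number of vertices whose removal from `G`
leaves a graph `H` with χ'(H) ≤ Δ(G). -/
noncomputable def rv' (G : Mgraph) : ℕ :=
  sInf {k : ℕ | ∃ S : Set G.V, Nat.card S = k ∧
    (G.deleteVerts S).chromaticIndex ≤ G.maxDegree}

/-- The edge boundary ∂_G(X): the set of edges with one endpoint in `X` and one
endpoint outside `X`. -/
def edgeBoundary (G : Mgraph) (X : Set G.V) : Set G.E :=
  {e : G.E | ∃ u ∈ G.inc e, ∃ w ∈ G.inc e, u ∈ X ∧ w ∉ X}

/-- `G` is an `s`-graph: a loopless `s`-regular multigraph with `|∂_G(X)| ≥ s` for every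
odd set `X` of vertices. -/
def IsSGraph (G : Mgraph) (s : ℕ) : Prop :=
  G.Loopless ∧ G.Regular s ∧
    ∀ X : Set G.V, Odd (Nat.card X) → s ≤ Nat.card (G.edgeBoundary X)

end Mgraph

/-- The complete graph on `n` vertices, as a multigraph: its edges are the non-diagonal
unordered pairs of vertices. -/
def completeMgraph (n : ℕ) : Mgraph where
  V := Fin n
  E := {p : Sym2 (Fin n) // ¬ p.IsDiag}
  inc := Subtype.val

/-!
Every colour class of a proper edge colouring is a matching, so on `2k + 1` vertices it has at
most `k` edges: `2k` colours cover at most `2k · k` of the `k (2k + 1)` edges of `K_{2k+1}`, and at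
least `k` edges must be removed. Colouring `{a, b}` by `a + b` in `ℤ/(2k+1)` is proper with `2k + 1`
colours, and its class `0` is the set of at most `k` edges to remove.

A decomposition of a `2k`-regular graph consists of exactly `k` 2-factors, and on an odd number of
vertices each 2-factor has a component of odd order, so `ξ ≥ k`. Walecki's decomposition of
`K_{2k+1}` into `k` Hamiltonian cycles attains this bound.
-/

theorem Nat.card_eq_sum_card_fiber {α β : Type*} [Finite α] [Fintype β] (f : α → β) :
    Nat.card α = ∑ b, Nat.card {a // f a = b} := by
  rw [← Nat.card_sigma, Nat.card_congr (Equiv.sigmaFiberEquiv f)]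

theorem ZMod.natCast_ne_zero_of_pos_of_lt {m n : ℕ} (h0 : 0 < m) (h : m < n) :
    (m : ZMod n) ≠ 0 := by
  rw [Ne, ZMod.natCast_eq_zero_iff]
  exact fun hd => (Nat.le_of_dvd h0 hd).not_gt h

theorem ZMod.self_ne_add_one {n : ℕ} (hn : n ≠ 1) (t : ZMod n) : t ≠ t + 1 :=
  have := ZMod.nontrivial_iff.2 hn
  (add_ne_left.2 one_ne_zero).symm

theorem ZMod.val_add_one_eq_ite {m : ℕ} (t : ZMod (m + 1)) :
    (t + 1).val = if t.val = m then 0 else t.val + 1 := by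
  have ht := ZMod.val_lt t
  rw [ZMod.val_add, ZMod.val_one_eq_one_mod]
  rcases Nat.eq_zero_or_pos m with rfl | hm
  · rw [Nat.mod_one, if_pos (by omega)]
  rw [Nat.one_mod_eq_one.2 (by omega)]
  split_ifs with h
  · rw [h, Nat.mod_self]
  · exact Nat.mod_eq_of_lt (by omega)

theorem Sym2.eq_of_mem_of_lift_add_eq {A : Type*} [AddCommGroup A] {v : A} {p q : Sym2 A}
    (hp : v ∈ p) (hq : v ∈ q)
    (h : Sym2.lift ⟨(· + ·), add_comm⟩ p = Sym2.lift ⟨(· + ·), add_comm⟩ q) : p = q := by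
  rw [← Sym2.other_spec hp, ← Sym2.other_spec hq] at h ⊢
  simp only [Sym2.lift_mk, add_right_inj] at h
  rw [h]

namespace Mgraph

variable {G : Mgraph}

theorem card_colorClass_le (hG : G.Loopless) {D : ℕ} {c : G.E → Fin D}
    (hc : G.IsProperEdgeColoring c) (j : Fin D) :
    Nat.card {e // c e = j} ≤ Nat.card G.V / 2 := by
  let ends : {e // c e = j} × Bool → G.V := fun p =>
    if p.2 then (G.inc p.1).out.1 else (G.inc p.1).out.2
  have hinc : ∀ e, G.inc e = s((G.inc e).out.1, (G.inc e).out.2) := fun e => (Quot.out_eq _).symm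
  have hmem : ∀ p, ends p ∈ G.inc p.1 := by
    rintro ⟨e, _ | _⟩ <;> rw [hinc e] <;> simp [ends]
  have hinj : Function.Injective ends := by
    rintro ⟨e, b⟩ ⟨f, b'⟩ h
    obtain rfl : e = f := by
      by_contra hne
      exact hc e f (Subtype.coe_injective.ne hne) ⟨_, hmem (e, b), h ▸ hmem (f, b')⟩
        (e.2.trans f.2.symm)
    have hloop : (G.inc e).out.1 ≠ (G.inc e).out.2 := fun h' =>
      hG e (by rw [hinc e, Sym2.mk_isDiag_iff]; exact h')
    cases b <;> cases b' <;> simp only [ends, Bool.false_eq_true, if_true, if_false] at h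
    exacts [rfl, absurd h.symm hloop, absurd h hloop, rfl]
  have := Nat.card_le_card_of_injective ends hinj
  rw [Nat.card_prod, Nat.card_eq_fintype_card (α := Bool), Fintype.card_bool] at this
  exact (Nat.le_div_iff_mul_le two_pos).2 this

theorem card_edges_le_of_edgeColorable (hG : G.Loopless) {D : ℕ} (h : G.EdgeColorable D) :
    Nat.card G.E ≤ D * (Nat.card G.V / 2) := by
  obtain ⟨c, hc⟩ := h
  calc Nat.card G.E = ∑ j, Nat.card {e // c e = j} := Nat.card_eq_sum_card_fiber c
    _ ≤ ∑ _j : Fin D, Nat.card G.V / 2 :=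
      Finset.sum_le_sum fun j _ => card_colorClass_le hG hc j
    _ = D * (Nat.card G.V / 2) := by simp

theorem Loopless.deleteEdges (hG : G.Loopless) (S : Set G.E) : (G.deleteEdges S).Loopless :=
  fun e => hG e.1

theorem card_edges_deleteEdges_add (S : Set G.E) :
    Nat.card (G.deleteEdges S).E + Nat.card S = Nat.card G.E := by
  classical
  rw [add_comm, ← Nat.card_sum]
  exact Nat.card_congr (Equiv.sumCompl (· ∈ S))

theorem edgeColorable_deleteEdges_univ (D : ℕ) : (G.deleteEdges Set.univ).EdgeColorable D :=
  ⟨fun e => absurd trivial e.2, fun e => absurd trivial e.2⟩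

theorem edgeColorable_deleteEdges_colorClass {D : ℕ} {c : G.E → Fin (D + 1)}
    (hc : G.IsProperEdgeColoring c) (j : Fin (D + 1)) :
    (G.deleteEdges {e | c e = j}).EdgeColorable D :=
  ⟨fun e => (finSuccAboveEquiv j).symm ⟨c e.1, e.2⟩, fun e f hef hv h =>
    hc e.1 f.1 (Subtype.coe_injective.ne hef) hv (by simpa using h)⟩

theorem resistanceTo_le_card {S : Set G.E} {D : ℕ} (h : (G.deleteEdges S).EdgeColorable D) :
    G.resistanceTo D ≤ Nat.card S :=
  Nat.sInf_le ⟨S, rfl, h⟩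

theorem card_edges_le_add_resistanceTo (hG : G.Loopless) (D : ℕ) :
    Nat.card G.E ≤ D * (Nat.card G.V / 2) + G.resistanceTo D := by
  obtain ⟨S, hS, hcol⟩ := Nat.sInf_mem (s := {k : ℕ | ∃ S : Set G.E, Nat.card S = k ∧
    (G.deleteEdges S).EdgeColorable D}) ⟨_, Set.univ, rfl, edgeColorable_deleteEdges_univ D⟩
  rw [resistanceTo, ← hS, ← card_edges_deleteEdges_add S]
  exact Nat.add_le_add_right (card_edges_le_of_edgeColorable (hG.deleteEdges S) hcol) _

theorem maxDegree_eq_of_regular [Nonempty G.V] {s : ℕ} (h : G.Regular s) : G.maxDegree = s := by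
  rw [maxDegree, show G.degree = fun _ => s from funext h, Set.range_const, csSup_singleton]

theorem one_le_oddCycles (hV : Odd (Nat.card G.V)) (F : Set G.E) : 1 ≤ G.oddCycles F := by
  classical
  let H := G.factorGraph F
  have : Fintype H.ConnectedComponent := Fintype.ofFinite _
  obtain ⟨C, hC⟩ : ∃ C : H.ConnectedComponent,
      Odd (Nat.card {v // H.connectedComponentMk v = C}) := by
    by_contra! h
    rw [Nat.card_eq_sum_card_fiber H.connectedComponentMk] at hV
    exact Nat.not_odd_iff_even.2 (Finset.even_sum _ fun C _ => Nat.not_odd_iff_even.1 (h C)) hV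
  have : Nonempty {C : H.ConnectedComponent //
      Odd (Nat.card {v // H.connectedComponentMk v = C})} := ⟨⟨C, hC⟩⟩
  exact Nat.card_pos

theorem oddCycles_eq_one_of_connected (hV : Odd (Nat.card G.V)) {F : Set G.E}
    (hF : (G.factorGraph F).Connected) : G.oddCycles F = 1 := by
  have := hF.preconnected.subsingleton_connectedComponent
  exact le_antisymm (Finite.card_le_one_iff_subsingleton.2 inferInstance) (one_le_oddCycles hV F)

theorem degree_eq_sum_card_fiber {β : Type*} [Fintype β] (f : G.E → β) (v : G.V) :
    G.degree v = ∑ b, Nat.card {e // e ∈ {e | f e = b} ∧ v ∈ G.inc e} := by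
  rw [degree, Nat.card_eq_sum_card_fiber (fun a : {e // v ∈ G.inc e} => f a.1)]
  exact Finset.sum_congr rfl fun b _ => Nat.card_congr
    ((Equiv.subtypeSubtypeEquivSubtypeInter (v ∈ G.inc ·) (f · = b)).trans
      (Equiv.subtypeEquivRight fun _ => and_comm))

theorem IsDecomp.card_eq_of_regular [Nonempty G.V] {n k : ℕ} {f : G.E → Option (Fin n)}
    (hf : G.IsDecomp f) (hG : G.Regular (2 * k)) : n = k := by
  obtain ⟨v⟩ := ‹Nonempty G.V›
  have hdeg := degree_eq_sum_card_fiber f v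
  rw [hG v, Fintype.sum_option, Finset.sum_congr rfl fun i _ => hf.2 i v] at hdeg
  have hnone : Nat.card {e // e ∈ {e | f e = none} ∧ v ∈ G.inc e} ≤ 1 := by
    rcases hf.1 with h | h
    · have : IsEmpty {e // e ∈ {e | f e = none} ∧ v ∈ G.inc e} := ⟨fun e => h e.1 e.2.1⟩
      rw [Nat.card_of_isEmpty]
      exact zero_le_one
    · exact (h v).le
  simp only [Finset.sum_const, Finset.card_univ, Fintype.card_fin, smul_eq_mul] at hdeg
  omega

theorem le_decompOdd (hV : Odd (Nat.card G.V)) {n : ℕ} (f : G.E → Option (Fin n)) :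
    n ≤ G.decompOdd f :=
  calc n = ∑ _i : Fin n, 1 := by simp
    _ ≤ G.decompOdd f := Finset.sum_le_sum fun i _ => one_le_oddCycles hV _

theorem le_oddness (hV : Odd (Nat.card G.V)) {k : ℕ} (hG : G.Regular (2 * k)) :
    (k : ℕ∞) ≤ G.oddness := by
  have : Nonempty G.V := (Nat.card_ne_zero.1 hV.pos.ne').1
  refine le_sInf ?_
  rintro _ ⟨n, f, hf, rfl⟩
  rw [← hf.card_eq_of_regular hG]
  exact_mod_cast le_decompOdd hV f

def IsHamiltonianCycle (G : Mgraph) {n : ℕ} (σ : ZMod n ≃ G.V) (c : ZMod n → G.E) : Prop :=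
  ∀ t, G.inc (c t) = s(σ t, σ (t + 1))

namespace IsHamiltonianCycle

variable {n : ℕ} {σ : ZMod n ≃ G.V} {c : ZMod n → G.E}

theorem injective (hc : G.IsHamiltonianCycle σ c) (hn : 3 ≤ n) : Function.Injective c := by
  intro t u h
  have h' := congrArg G.inc h
  rw [hc, hc, Sym2.eq_iff] at h'
  rcases h' with ⟨h1, -⟩ | ⟨h1, h2⟩
  · exact σ.injective h1
  · rw [σ.injective h1, σ.apply_eq_iff_eq] at h2
    refine absurd ?_ (ZMod.natCast_ne_zero_of_pos_of_lt two_pos (n := n) hn)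
    push_cast
    linear_combination h2

theorem isTwoFactor (hc : G.IsHamiltonianCycle σ c) (hn : 3 ≤ n) :
    G.IsTwoFactor (Set.range c) := by
  intro v
  have hset : {e | e ∈ Set.range c ∧ v ∈ G.inc e} = c '' {σ.symm v, σ.symm v - 1} := by
    ext e
    constructor
    · rintro ⟨⟨u, rfl⟩, hv⟩
      rw [hc, Sym2.mem_iff, ← σ.symm_apply_eq, ← σ.symm_apply_eq] at hv
      refine ⟨u, ?_, rfl⟩
      rcases hv with rfl | hv
      · exact Or.inl rfl
      · exact Or.inr (eq_sub_of_add_eq hv.symm)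
    · rintro ⟨u, hu, rfl⟩
      refine ⟨⟨u, rfl⟩, ?_⟩
      rw [hc, Sym2.mem_iff]
      rcases hu with rfl | rfl
      · exact Or.inl (σ.apply_symm_apply v).symm
      · exact Or.inr (by simp)
  change Nat.card ({e | e ∈ Set.range c ∧ v ∈ G.inc e} : Set G.E) = 2
  rw [Nat.card_coe_set_eq, hset, Set.ncard_image_of_injective _ (hc.injective hn), Set.ncard_pair]
  intro h
  exact ZMod.self_ne_add_one (by omega) (σ.symm v - 1) (by rw [sub_add_cancel, ← h])

theorem connected (hc : G.IsHamiltonianCycle σ c) (hn : 2 ≤ n) :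
    (G.factorGraph (Set.range c)).Connected := by
  have : NeZero n := ⟨by omega⟩
  have hadj : ∀ t, (G.factorGraph (Set.range c)).Adj (σ t) (σ (t + 1)) := fun t =>
    ⟨σ.injective.ne (ZMod.self_ne_add_one (by omega) t), c t, ⟨t, rfl⟩, hc t⟩
  have hreach : ∀ m : ℕ, (G.factorGraph (Set.range c)).Reachable (σ 0) (σ m) := by
    intro m
    induction m with
    | zero => simp
    | succ m ih => exact ih.trans (by simpa using (hadj m).reachable)
  have hall : ∀ v, (G.factorGraph (Set.range c)).Reachable (σ 0) v := fun v => by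
    simpa [ZMod.natCast_zmod_val] using hreach (σ.symm v).val
  exact (SimpleGraph.connected_iff _).2 ⟨fun u w => (hall u).symm.trans (hall w), ⟨σ 0⟩⟩

theorem oddCycles_eq_one (hc : G.IsHamiltonianCycle σ c) (hn : 3 ≤ n) (hodd : Odd n) :
    G.oddCycles (Set.range c) = 1 := by
  have : NeZero n := ⟨by omega⟩
  refine oddCycles_eq_one_of_connected ?_ (hc.connected (by omega))
  rwa [← Nat.card_congr σ, Nat.card_zmod]

end IsHamiltonianCycle

end Mgraph

/-! The vertex `2k` of `K_{2k+1}` plays the role of `∞`; the others are the residues mod `2k`.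
The `i`-th Walecki cycle is `∞, i, i + 1, i - 1, i + 2, i - 2, …, i + k` (mod `2k`); its edges
inside `ℤ/2k` are those `{a, b}` with `a + b ∈ {2i, 2i + 1}`, and it meets `∞` at `i` and `i + k`. -/

def waleckiVertex (k i t : ℕ) : ℕ :=
  if t = 2 * k then 2 * k
  else if t % 2 = 1 then i + (t + 1) / 2
  else if t / 2 ≤ i then i - t / 2
  else i + 2 * k - t / 2

def waleckiColor (k a b : ℕ) : ℕ :=
  if a = 2 * k then (if b < k then b else b - k)
  else if b = 2 * k then (if a < k then a else a - k)
  else if a + b < 2 * k then (a + b) / 2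
  else (a + b - 2 * k) / 2

section Walecki

variable {k i t : ℕ}

theorem waleckiVertex_lt (hi : i < k) (ht : t ≤ 2 * k) : waleckiVertex k i t < 2 * k + 1 := by
  unfold waleckiVertex; split_ifs <;> omega

theorem waleckiVertex_inj {t' : ℕ} (hi : i < k) (ht : t ≤ 2 * k) (ht' : t' ≤ 2 * k)
    (h : waleckiVertex k i t = waleckiVertex k i t') : t = t' := by
  unfold waleckiVertex at h; split_ifs at h <;> omega

theorem waleckiColor_comm (a b : ℕ) : waleckiColor k a b = waleckiColor k b a := by
  unfold waleckiColor; split_ifs <;> omega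

theorem waleckiColor_lt {a b : ℕ} (ha : a ≤ 2 * k) (hb : b ≤ 2 * k) (hab : a ≠ b) :
    waleckiColor k a b < k := by
  unfold waleckiColor; split_ifs <;> omega

theorem waleckiColor_waleckiVertex (hi : i < k) (ht : t ≤ 2 * k) :
    waleckiColor k (waleckiVertex k i t)
      (waleckiVertex k i (if t = 2 * k then 0 else t + 1)) = i := by
  unfold waleckiColor waleckiVertex; split_ifs <;> omega

end Walecki

namespace completeMgraph

theorem loopless (n : ℕ) : (completeMgraph n).Loopless := fun e => e.2

theorem card_verts (n : ℕ) : Nat.card (completeMgraph n).V = n := Nat.card_fin n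

theorem card_edges (n : ℕ) : Nat.card (completeMgraph n).E = n.choose 2 := by
  classical
  show Nat.card {p : Sym2 (Fin n) // ¬ p.IsDiag} = _
  rw [Nat.card_eq_fintype_card, Sym2.card_subtype_not_diag, Fintype.card_fin]

theorem card_edges_odd (k : ℕ) :
    Nat.card (completeMgraph (2 * k + 1)).E = (2 * k + 1) * k := by
  rw [card_edges, Nat.choose_two_right, Nat.add_sub_cancel, mul_left_comm,
    Nat.mul_div_cancel_left _ two_pos]

theorem degree_eq (n : ℕ) (v : (completeMgraph n).V) : (completeMgraph n).degree v = n - 1 := by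
  classical
  suffices h : ∀ w : Fin n, Nat.card {e : {p : Sym2 (Fin n) // ¬ p.IsDiag} // w ∈ e.1} = n - 1 from
    h v
  intro w
  have e : {e : {p : Sym2 (Fin n) // ¬ p.IsDiag} // w ∈ e.1} ≃
      (SimpleGraph.completeGraph (Fin n)).incidenceSet w :=
    (Equiv.subtypeSubtypeEquivSubtypeInter (fun p : Sym2 (Fin n) => ¬ p.IsDiag) (w ∈ ·)).trans
      (Equiv.subtypeEquivRight fun p => by simp [SimpleGraph.incidenceSet])
  rw [Nat.card_congr e, Nat.card_eq_fintype_card, SimpleGraph.card_incidenceSet_eq_degree,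
    SimpleGraph.complete_graph_degree, Fintype.card_fin]

theorem regular (n : ℕ) : (completeMgraph n).Regular (n - 1) := degree_eq n

theorem maxDegree_eq (k : ℕ) : (completeMgraph (k + 1)).maxDegree = k :=
  have : Nonempty (completeMgraph (k + 1)).V := ⟨(0 : Fin (k + 1))⟩
  Mgraph.maxDegree_eq_of_regular (regular (k + 1))

def sumColoring (n : ℕ) [NeZero n] : (completeMgraph n).E → Fin n :=
  fun e : {p : Sym2 (Fin n) // ¬ p.IsDiag} => Sym2.lift ⟨(· + ·), add_comm⟩ e.1

theorem isProperEdgeColoring_sumColoring (n : ℕ) [NeZero n] :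
    (completeMgraph n).IsProperEdgeColoring (sumColoring n) := by
  rintro ⟨e, he⟩ ⟨f, hf⟩ hne ⟨v, hve, hvf⟩ h
  exact hne (Subtype.ext (Sym2.eq_of_mem_of_lift_add_eq (A := Fin n) hve hvf h))

theorem resistance_odd (k : ℕ) : (completeMgraph (2 * k + 1)).resistance = k := by
  have hproper := isProperEdgeColoring_sumColoring (2 * k + 1)
  rw [Mgraph.resistance, maxDegree_eq]
  apply le_antisymm
  · calc (completeMgraph (2 * k + 1)).resistanceTo (2 * k)
        ≤ Nat.card {e | sumColoring (2 * k + 1) e = 0} :=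
          Mgraph.resistanceTo_le_card (Mgraph.edgeColorable_deleteEdges_colorClass hproper 0)
      _ ≤ Nat.card (completeMgraph (2 * k + 1)).V / 2 :=
          Mgraph.card_colorClass_le (loopless _) hproper 0
      _ = k := by rw [card_verts]; omega
  · have h := Mgraph.card_edges_le_add_resistanceTo (loopless (2 * k + 1)) (2 * k)
    rw [card_edges_odd, card_verts, show (2 * k + 1) / 2 = k by omega] at h
    linarith

section Walecki

variable {k : ℕ}

noncomputable def waleckiCycle (i : Fin k) : ZMod (2 * k + 1) ≃ (completeMgraph (2 * k + 1)).V :=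
  Equiv.ofBijective (fun t => (⟨waleckiVertex k i t.val,
      waleckiVertex_lt i.2 (Nat.lt_succ_iff.1 (ZMod.val_lt t))⟩ : Fin (2 * k + 1))) <| by
    refine Function.Injective.bijective_of_nat_card_le (fun t u h => ?_) (by simp [card_verts])
    exact ZMod.val_injective _ (waleckiVertex_inj i.2 (Nat.lt_succ_iff.1 (ZMod.val_lt t))
      (Nat.lt_succ_iff.1 (ZMod.val_lt u)) (congrArg Fin.val h))

noncomputable def waleckiEdge (i : Fin k) (t : ZMod (2 * k + 1)) :
    (completeMgraph (2 * k + 1)).E :=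
  ⟨s(waleckiCycle i t, waleckiCycle i (t + 1)), Sym2.mk_isDiag_iff.not.2
    ((waleckiCycle i).injective.ne (ZMod.self_ne_add_one (by have := i.pos; omega) t))⟩

theorem isHamiltonianCycle_walecki (i : Fin k) :
    (completeMgraph (2 * k + 1)).IsHamiltonianCycle (waleckiCycle i) (waleckiEdge i) :=
  fun _ => rfl

def waleckiDecomp (e : (completeMgraph (2 * k + 1)).E) : Fin k :=
  ⟨Sym2.lift ⟨fun a b : Fin (2 * k + 1) => waleckiColor k a b, fun a b => waleckiColor_comm a b⟩
    e.1, by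
      obtain ⟨p, hp⟩ := e
      induction p using Sym2.inductionOn with
      | _ a b =>
        have hab := Fin.val_injective.ne (Sym2.mk_isDiag_iff.not.1 hp)
        exact waleckiColor_lt (Nat.lt_succ_iff.1 a.2) (Nat.lt_succ_iff.1 b.2) hab⟩

theorem waleckiDecomp_waleckiEdge (i : Fin k) (t : ZMod (2 * k + 1)) :
    waleckiDecomp (waleckiEdge i t) = i := by
  ext
  show waleckiColor k (waleckiVertex k i t.val) (waleckiVertex k i (t + 1).val) = i
  rw [ZMod.val_add_one_eq_ite]
  exact waleckiColor_waleckiVertex i.2 (Nat.lt_succ_iff.1 (ZMod.val_lt t))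

theorem waleckiEdge_surjective :
    Function.Surjective (fun p : Fin k × ZMod (2 * k + 1) => waleckiEdge p.1 p.2) := by
  refine (Function.Injective.bijective_of_nat_card_le ?_ ?_).2
  · rintro ⟨i, t⟩ ⟨j, u⟩ h
    obtain rfl : i = j := by
      simpa only [waleckiDecomp_waleckiEdge] using congrArg waleckiDecomp h
    exact Prod.ext rfl ((isHamiltonianCycle_walecki i).injective (by have := i.pos; omega) h)
  · rw [card_edges_odd, Nat.card_prod, Nat.card_zmod, Nat.card_fin, mul_comm]

theorem setOf_waleckiDecomp_eq (i : Fin k) :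
    {e | waleckiDecomp e = i} = Set.range (waleckiEdge i) := by
  ext e
  obtain ⟨⟨j, t⟩, rfl⟩ := waleckiEdge_surjective e
  simp only [Set.mem_ofPred_eq, waleckiDecomp_waleckiEdge, Set.mem_range]
  constructor
  · rintro rfl
    exact ⟨t, rfl⟩
  · rintro ⟨u, hu⟩
    rw [← waleckiDecomp_waleckiEdge i u, hu, waleckiDecomp_waleckiEdge]

end Walecki

theorem oddness_le (k : ℕ) : (completeMgraph (2 * k + 1)).oddness ≤ k := by
  have hfactor : ∀ i : Fin k,
      {e | some (waleckiDecomp e) = some i} = Set.range (waleckiEdge i) :=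
    fun i => by simp only [Option.some.injEq, setOf_waleckiDecomp_eq]
  have hodd : ∀ i : Fin k,
      (completeMgraph (2 * k + 1)).oddCycles {e | some (waleckiDecomp e) = some i} = 1 :=
    fun i => by
      rw [hfactor]
      exact (isHamiltonianCycle_walecki i).oddCycles_eq_one (by have := i.pos; omega)
        (odd_two_mul_add_one k)
  refine sInf_le ⟨k, fun e => some (waleckiDecomp e),
    ⟨Or.inl fun e => Option.some_ne_none _, fun i => ?_⟩, ?_⟩
  · rw [hfactor]
    exact (isHamiltonianCycle_walecki i).isTwoFactor (by have := i.pos; omega)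
  · rw [Mgraph.decompOdd, Finset.sum_congr rfl fun i _ => hodd i]
    simp

end completeMgraph

open Mgraph in
theorem resistance_oddness_complete_graph_general (k : ℕ) :
    (completeMgraph (2 * k + 1)).resistance = k ∧
    (completeMgraph (2 * k + 1)).oddness = (k : ℕ∞) :=
  ⟨completeMgraph.resistance_odd k,
    le_antisymm (completeMgraph.oddness_le k)
      (le_oddness (by rw [completeMgraph.card_verts]; exact odd_two_mul_add_one k)
        (completeMgraph.regular (2 * k + 1)))⟩

open Mgraph in
/-- For every `k ≥ 1`, the complete graph `K_{2k+1}` satisfies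
`r(K_{2k+1}) = k` and `ξ(K_{2k+1}) = k`. -/
theorem resistance_oddness_complete_graph (k : ℕ) (hk : 1 ≤ k) :
    (completeMgraph (2 * k + 1)).resistance = k ∧
    (completeMgraph (2 * k + 1)).oddness = (k : ℕ∞) :=
  resistance_oddness_complete_graph_general k
end

section
/- Let G be a finite loopless multigraph, let Δ = Δ(G), and let v be a vertex of G. Denote by r_e^Δ(H) the minimum number of edges that must be removed from a subgraph H of G to obtain a Δ-edge-colorable graph. Then r_e^Δ(G) ≤ r_e^Δ(G − v) + ⌊d_G(v)/2⌋ ≤ r_e^Δ(G − v) + ⌊Δ/2⌋. -/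
namespace SimpleGraph

variable {V : Type*} [Fintype V] {H : SimpleGraph V} [DecidableRel H.Adj]

lemma Connected.sum_two_sub_degree_le (hH : H.Connected) :
    ∑ x, (2 - (H.degree x : ℤ)) ≤ 2 := by
  have hsum := H.sum_degrees_eq_twice_card_edges
  have hcard := hH.card_vert_le_card_edgeSet_add_one
  rw [Nat.card_eq_fintype_card, Nat.card_eq_fintype_card, ← edgeFinset_card] at hcard
  rw [Finset.sum_sub_distrib, ← Nat.cast_sum, hsum]
  simp only [Finset.sum_const, Finset.card_univ, nsmul_eq_mul]
  push_cast
  omega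

theorem eq_or_eq_or_eq_of_reachable_of_degree_le_one (hmax : ∀ x, H.degree x ≤ 2) {a b c : V}
    (ha : H.degree a ≤ 1) (hb : H.degree b ≤ 1) (hc : H.degree c ≤ 1)
    (hab : H.Reachable a b) (hac : H.Reachable a c) : a = b ∨ a = c ∨ b = c := by
  classical
  by_contra! hne
  generalize hC : H.connectedComponentMk a = C
  have hdegC (x : C.supp) : (H.induce C.supp).degree x = H.degree x :=
    degree_induce_of_neighborSet_subset fun y hy => C.mem_supp_of_adj_mem_supp x.2 hy
  let a' : C.supp := ⟨a, hC⟩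
  let b' : C.supp := ⟨b, (ConnectedComponent.sound hab.symm).trans hC⟩
  let c' : C.supp := ⟨c, (ConnectedComponent.sound hac.symm).trans hC⟩
  have hends : (3 : ℤ) ≤ ∑ x ∈ {a', b', c'}, (2 - ((H.induce C.supp).degree x : ℤ)) := by
    rw [Finset.sum_insert (by simp [a', b', c', Subtype.ext_iff, hne.1, hne.2.1]),
      Finset.sum_pair (by simp [b', c', Subtype.ext_iff, hne.2.2])]
    simp only [hdegC, a', b', c']
    omega
  have hrest := Finset.sum_le_sum_of_subset_of_nonneg (Finset.subset_univ {a', b', c'})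
    (f := fun x => 2 - ((H.induce C.supp).degree x : ℤ)) fun x _ _ => by
      have := hmax x; simp only [hdegC]; omega
  have hconn : ∑ x, (2 - ((H.induce C.supp).degree x : ℤ)) ≤ 2 := by
    convert C.connected_toSimpleGraph.sum_two_sub_degree_le <;> rfl
  omega

end SimpleGraph

namespace Mgraph

open Finset
open scoped Classical

noncomputable instance (G : Mgraph) : Fintype G.E := Fintype.ofFinite _
noncomputable instance (G : Mgraph) : Fintype G.V := Fintype.ofFinite _

variable {G : Mgraph} {D : ℕ}

lemma degree_eq_card (w : G.V) : G.degree w = #{e | w ∈ G.inc e} := by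
  rw [degree, Nat.card_eq_fintype_card, Fintype.card_subtype]

lemma degree_le_maxDegree (w : G.V) : G.degree w ≤ G.maxDegree :=
  le_csSup (Set.finite_range _).bddAbove ⟨w, rfl⟩

lemma card_mem_inc_le_two (e : G.E) : #{w | w ∈ G.inc e} ≤ 2 := by
  generalize G.inc e = z
  induction z using Sym2.ind with
  | h a b => exact (card_le_card (t := {a, b}) fun w => by simp).trans card_le_two

lemma resistanceTo_le {S : Set G.E} (h : (G.deleteEdges S).EdgeColorable D) :
    G.resistanceTo D ≤ Nat.card S :=
  Nat.sInf_le ⟨S, rfl, h⟩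

lemma exists_card_eq_resistanceTo (G : Mgraph) (D : ℕ) :
    ∃ S : Set G.E, Nat.card S = G.resistanceTo D ∧ (G.deleteEdges S).EdgeColorable D :=
  Nat.sInf_mem (s := {k | ∃ S : Set G.E, Nat.card S = k ∧ (G.deleteEdges S).EdgeColorable D})
    ⟨_, Set.univ, rfl, fun e => (e.2 trivial).elim, fun e => (e.2 trivial).elim⟩

/-- `c e = none` means that `e` is left uncolored. -/
def IsProperPartialColoring (G : Mgraph) (c : G.E → Option (Fin D)) : Prop :=
  ∀ ⦃w : G.V⦄ ⦃x : Fin D⦄ ⦃e f : G.E⦄,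
    w ∈ G.inc e → w ∈ G.inc f → c e = some x → c f = some x → e = f

def Misses (G : Mgraph) (c : G.E → Option (Fin D)) (w : G.V) (x : Fin D) : Prop :=
  ∀ e, w ∈ G.inc e → c e ≠ some x

lemma IsProperPartialColoring.eq_of_color_eq {c : G.E → Option (Fin D)}
    (hc : G.IsProperPartialColoring c) {w : G.V} {e f : G.E} (hwe : w ∈ G.inc e)
    (hwf : w ∈ G.inc f) (he : c e ≠ none) (hef : c e = c f) : e = f := by
  obtain ⟨x, hx⟩ := Option.ne_none_iff_exists'.1 he
  exact hc hwe hwf hx (hef ▸ hx)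

lemma exists_isProperPartialColoring_of_edgeColorable {S : Set G.E}
    (h : (G.deleteEdges S).EdgeColorable D) :
    ∃ c : G.E → Option (Fin D), G.IsProperPartialColoring c ∧ ∀ e, c e = none → e ∈ S := by
  obtain ⟨col, hcol⟩ := h
  refine ⟨fun e => if he : e ∉ S then some (col ⟨e, he⟩) else none, ?_, fun e => ?_⟩
  · intro w x e f hwe hwf hce hcf
    dsimp only at hce hcf
    split_ifs at hce hcf with he hf
    by_contra hef
    exact hcol ⟨e, he⟩ ⟨f, hf⟩ (fun h => hef (congrArg Subtype.val h)) ⟨w, hwe, hwf⟩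
      (Option.some_injective _ (hce.trans hcf.symm))
  · dsimp only
    split_ifs with he <;> simp [he]

lemma IsProperPartialColoring.edgeColorable_deleteEdges {c : G.E → Option (Fin D)}
    (hc : G.IsProperPartialColoring c) : (G.deleteEdges {e | c e = none}).EdgeColorable D := by
  refine ⟨fun e => (c e.1).get (Option.isSome_iff_ne_none.2 e.2), ?_⟩
  rintro ⟨e, he⟩ ⟨f, hf⟩ hef ⟨w, hwe, hwf⟩ hcol
  have hcef : c e = c f := by simpa only [Option.some_get] using congrArg some hcol
  exact hef (Subtype.ext (hc.eq_of_color_eq hwe hwf he hcef))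

lemma exists_isProperPartialColoring_of_deleteVerts {S : Set G.V}
    {c : (G.deleteVerts S).E → Option (Fin D)} (hc : (G.deleteVerts S).IsProperPartialColoring c) :
    ∃ c' : G.E → Option (Fin D), G.IsProperPartialColoring c' ∧
      ∀ e (he : ∀ w ∈ G.inc e, w ∉ S), c' e = c ⟨e, he⟩ := by
  refine ⟨fun e => if he : ∀ w ∈ G.inc e, w ∉ S then c ⟨e, he⟩ else none, ?_,
    fun e he => dif_pos he⟩
  intro w x e f hwe hwf hce hcf
  dsimp only at hce hcf
  split_ifs at hce hcf with he hf
  have hmem {a : G.E} (ha : ∀ w ∈ G.inc a, w ∉ S) (hwa : w ∈ G.inc a) :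
      (⟨w, ha w hwa⟩ : (G.deleteVerts S).V) ∈ (G.deleteVerts S).inc ⟨a, ha⟩ :=
    (Sym2.mem_pmap_iff _ _ _ _).2 ⟨w, hwa, rfl⟩
  exact congrArg Subtype.val (hc (hmem he hwe) (hmem hf hwf) hce hcf)

section Counting

variable (c : G.E → Option (Fin D))

lemma degree_eq_card_colored_add_card_uncolored (w : G.V) :
    G.degree w = #{e | w ∈ G.inc e ∧ c e ≠ none} + #{e | w ∈ G.inc e ∧ c e = none} := by
  rw [degree_eq_card, ← card_filter_add_card_filter_not (p := fun e => c e ≠ none)]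
  simp only [filter_filter, not_not]

lemma card_not_misses_le_card_colored (w : G.V) :
    #{x | ¬ G.Misses c w x} ≤ #{e | w ∈ G.inc e ∧ c e ≠ none} := by
  rw [← card_map ⟨some, Option.some_injective _⟩]
  refine card_le_card_of_surjOn c fun y hy => ?_
  obtain ⟨x, hx, rfl⟩ := mem_map.1 hy
  obtain ⟨e, hwe, hce⟩ : ∃ e, w ∈ G.inc e ∧ c e = some x := by
    simpa [Misses] using hx
  exact ⟨e, by simp [hwe, hce], hce⟩

lemma card_uncolored_le_card_misses {w : G.V} (hw : G.degree w ≤ D) :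
    #{e | w ∈ G.inc e ∧ c e = none} ≤ #{x | G.Misses c w x} := by
  have hcolors := card_filter_add_card_filter_not (s := univ) fun x => G.Misses c w x
  rw [card_univ, Fintype.card_fin] at hcolors
  have := card_not_misses_le_card_colored c w
  rw [degree_eq_card_colored_add_card_uncolored c] at hw
  omega

end Counting

lemma IsProperPartialColoring.update {c : G.E → Option (Fin D)} (hc : G.IsProperPartialColoring c)
    {e : G.E} {x : Fin D} (hx : ∀ w ∈ G.inc e, G.Misses c w x) :
    G.IsProperPartialColoring (Function.update c e (some x)) := by
  intro w y a b hwa hwb hca hcb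
  by_cases hae : a = e <;> by_cases hbe : b = e
  · rw [hae, hbe]
  · subst hae
    rw [Function.update_self, Option.some_inj] at hca
    rw [Function.update_of_ne hbe, ← hca] at hcb
    exact absurd hcb (hx w hwa b hwb)
  · subst hbe
    rw [Function.update_self, Option.some_inj] at hcb
    rw [Function.update_of_ne hae, ← hcb] at hca
    exact absurd hca (hx w hwb a hwa)
  · rw [Function.update_of_ne hae] at hca
    rw [Function.update_of_ne hbe] at hcb
    exact hc hwa hwb hca hcb

/-- Maximality refers only to the set of colored edges, so it survives recolorings such as
Kempe swaps. -/
def IsMaximalColoring (G : Mgraph) (c : G.E → Option (Fin D)) : Prop :=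
  MinimalFor G.IsProperPartialColoring (fun c => {e | c e = none}) c

lemma exists_isMaximalColoring {c₀ : G.E → Option (Fin D)} (hc₀ : G.IsProperPartialColoring c₀) :
    ∃ c : G.E → Option (Fin D), G.IsMaximalColoring c ∧ {e | c e = none} ⊆ {e | c₀ e = none} := by
  obtain ⟨c, ⟨hc, hsub⟩, hmin⟩ := Set.Finite.exists_minimalFor (fun c => {e | c e = none})
    {c | G.IsProperPartialColoring c ∧ {e | c e = none} ⊆ {e | c₀ e = none}} (Set.toFinite _)
    ⟨c₀, hc₀, subset_rfl⟩
  exact ⟨c, ⟨hc, fun c' hc' hle => hmin ⟨hc', hle.trans hsub⟩ hle⟩, hsub⟩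

lemma IsMaximalColoring.not_misses_both {c : G.E → Option (Fin D)} (hc : G.IsMaximalColoring c)
    {e : G.E} {v u : G.V} (he : c e = none) (hinc : G.inc e = s(v, u)) (x : Fin D) :
    ¬ (G.Misses c v x ∧ G.Misses c u x) := by
  intro ⟨hv, hu⟩
  have hx : ∀ w ∈ G.inc e, G.Misses c w x := by rw [hinc, Sym2.forall_mem_pair]; exact ⟨hv, hu⟩
  have hsub : {a | Function.update c e (some x) a = none} ⊆ {a | c a = none} := fun a ha => by
    by_cases hae : a = e
    · simp [hae] at ha
    · simpa [Function.update_of_ne hae] using ha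
  simpa using hc.2 (hc.1.update hx) hsub he

section Kempe

variable {c : G.E → Option (Fin D)} {i j : Fin D} {e f g : G.E}

/-- The line graph of the edges colored `i` or `j`; its components are the `(i, j)`-Kempe
chains. -/
def kempeGraph (c : G.E → Option (Fin D)) (i j : Fin D) : SimpleGraph G.E where
  Adj e f := e ≠ f ∧ (∃ w, w ∈ G.inc e ∧ w ∈ G.inc f) ∧
    c e ∈ ({some i, some j} : Set _) ∧ c f ∈ ({some i, some j} : Set _)
  symm := by
    constructor
    rintro e f ⟨hne, ⟨w, he, hf⟩, hce, hcf⟩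
    exact ⟨hne.symm, ⟨w, hf, he⟩, hcf, hce⟩
  loopless := by constructor; rintro e ⟨hne, -⟩; exact hne rfl

noncomputable def kempeSwap (c : G.E → Option (Fin D)) (i j : Fin D) (g : G.E) :
    G.E → Option (Fin D) := fun e =>
  if (G.kempeGraph c i j).Reachable g e then Equiv.swap (some i) (some j) (c e) else c e

lemma kempeSwap_of_reachable (h : (G.kempeGraph c i j).Reachable g e) :
    G.kempeSwap c i j g e = Equiv.swap (some i) (some j) (c e) :=
  if_pos h

lemma kempeSwap_of_not_reachable (h : ¬ (G.kempeGraph c i j).Reachable g e) :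
    G.kempeSwap c i j g e = c e :=
  if_neg h

lemma kempeSwap_eq_none_iff : G.kempeSwap c i j g e = none ↔ c e = none := by
  unfold kempeSwap
  split_ifs
  · rw [Equiv.swap_apply_eq_iff, Equiv.swap_apply_of_ne_of_ne] <;> simp
  · rfl

lemma mem_pair_of_reachable (hg : c g ∈ ({some i, some j} : Set _))
    (h : (G.kempeGraph c i j).Reachable g e) : c e ∈ ({some i, some j} : Set _) := by
  obtain ⟨p⟩ := h
  match p.reverse with
  | .nil => exact hg
  | .cons hadj _ => exact hadj.2.2.1

lemma IsProperPartialColoring.kempeSwap (hc : G.IsProperPartialColoring c) :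
    G.IsProperPartialColoring (G.kempeSwap c i j g) := by
  have hmixed {w : G.V} {x : Fin D} {e f : G.E} (hwe : w ∈ G.inc e) (hwf : w ∈ G.inc f)
      (hre : (G.kempeGraph c i j).Reachable g e) (hrf : ¬ (G.kempeGraph c i j).Reachable g f)
      (hce : Equiv.swap (some i) (some j) (c e) = some x) (hcf : c f = some x) : False := by
    by_cases hpair : c e ∈ ({some i, some j} : Set _)
    · have hfpair : c f ∈ ({some i, some j} : Set _) := by
        rw [hcf, ← hce]
        simp only [Set.mem_insert_iff, Set.mem_singleton_iff] at hpair ⊢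
        rcases hpair with h | h <;> simp [h]
      have hef : e ≠ f := fun h => hrf (h ▸ hre)
      exact hrf (hre.trans (SimpleGraph.Adj.reachable ⟨hef, ⟨w, hwe, hwf⟩, hpair, hfpair⟩))
    · simp only [Set.mem_insert_iff, Set.mem_singleton_iff, not_or] at hpair
      rw [Equiv.swap_apply_of_ne_of_ne hpair.1 hpair.2] at hce
      exact hrf (hc hwe hwf hce hcf ▸ hre)
  intro w x e f hwe hwf hce hcf
  by_cases hre : (G.kempeGraph c i j).Reachable g e <;>
    by_cases hrf : (G.kempeGraph c i j).Reachable g f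
  · rw [kempeSwap_of_reachable hre] at hce
    rw [kempeSwap_of_reachable hrf] at hcf
    refine hc.eq_of_color_eq hwe hwf (fun h => ?_) ((Equiv.injective _) (hce.trans hcf.symm))
    rw [h, Equiv.swap_apply_of_ne_of_ne (by simp) (by simp)] at hce
    simp at hce
  · rw [kempeSwap_of_reachable hre] at hce
    rw [kempeSwap_of_not_reachable hrf] at hcf
    exact (hmixed hwe hwf hre hrf hce hcf).elim
  · rw [kempeSwap_of_not_reachable hre] at hce
    rw [kempeSwap_of_reachable hrf] at hcf
    exact (hmixed hwf hwe hrf hre hcf hce).elim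
  · rw [kempeSwap_of_not_reachable hre] at hce
    rw [kempeSwap_of_not_reachable hrf] at hcf
    exact hc hwe hwf hce hcf

lemma IsProperPartialColoring.misses_kempeSwap (hc : G.IsProperPartialColoring c) {u : G.V}
    (hu : G.Misses c u i) (hgu : u ∈ G.inc g) (hcg : c g = some j) :
    G.Misses (G.kempeSwap c i j g) u j := by
  intro e hue hce
  by_cases hre : (G.kempeGraph c i j).Reachable g e
  · rw [kempeSwap_of_reachable hre, Equiv.swap_apply_eq_iff, Equiv.swap_apply_right] at hce
    exact hu e hue hce
  · rw [kempeSwap_of_not_reachable hre] at hce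
    exact hre (hc hgu hue hcg hce ▸ SimpleGraph.Reachable.refl g)

lemma IsMaximalColoring.kempeSwap (hc : G.IsMaximalColoring c) :
    G.IsMaximalColoring (G.kempeSwap c i j g) := by
  have hnone : {e | G.kempeSwap c i j g e = none} = {e | c e = none} :=
    Set.ext fun _ => kempeSwap_eq_none_iff
  refine ⟨hc.1.kempeSwap, fun c' hc' hle => ?_⟩
  simp only [hnone] at hle ⊢
  exact hc.2 hc' hle

lemma IsProperPartialColoring.not_mem_pair (hc : G.IsProperPartialColoring c) {w : G.V}
    {x y : Fin D} (hwe : w ∈ G.inc e) (hce : c e = some x) (hy : G.Misses c w y) (hfe : f ≠ e)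
    (hwf : w ∈ G.inc f) : c f ∉ ({some x, some y} : Set _) := by
  rintro (hcf | hcf)
  exacts [hfe (hc hwf hwe hcf hce), hy f hwf hcf]

/-- At each endpoint, `e` has at most one neighbor in the Kempe graph: the edge there carrying
the other color of the pair. -/
lemma IsProperPartialColoring.kempeGraph_degree_le (hc : G.IsProperPartialColoring c) (e : G.E) :
    (G.kempeGraph c i j).degree e ≤
      #{w | w ∈ G.inc e ∧ ∃ f ≠ e, w ∈ G.inc f ∧ c f ∈ ({some i, some j} : Set _)} := by
  set T : Finset G.V := {w | w ∈ G.inc e ∧ ∃ f ≠ e, w ∈ G.inc f ∧ c f ∈ ({some i, some j} : Set _)}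
  have hsub : (G.kempeGraph c i j).neighborFinset e ⊆
      T.biUnion fun w => {f | (G.kempeGraph c i j).Adj e f ∧ w ∈ G.inc f} := by
    intro f hf
    obtain ⟨hef, ⟨w, hwe, hwf⟩, -, hfpair⟩ := (SimpleGraph.mem_neighborFinset _ _ _).1 hf
    exact mem_biUnion.2 ⟨w, mem_filter.2 ⟨mem_univ w, hwe, f, Ne.symm hef, hwf, hfpair⟩,
      mem_filter.2 ⟨mem_univ f, (SimpleGraph.mem_neighborFinset _ _ _).1 hf, hwf⟩⟩
  have hfiber : ∀ w ∈ T, #{f | (G.kempeGraph c i j).Adj e f ∧ w ∈ G.inc f} ≤ 1 := by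
    intro w hw
    have hwe : w ∈ G.inc e := (mem_filter.1 hw).2.1
    refine card_le_one.2 fun f₁ h₁ f₂ h₂ => ?_
    obtain ⟨⟨hef₁, -, hepair, hpair₁⟩, hwf₁⟩ := (mem_filter.1 h₁).2
    obtain ⟨⟨hef₂, -, -, hpair₂⟩, hwf₂⟩ := (mem_filter.1 h₂).2
    have hne : c e ≠ none := fun h => by simp [h] at hepair
    have hne₁ : c f₁ ≠ c e := fun h => hef₁ (hc.eq_of_color_eq hwe hwf₁ hne h.symm)
    have hne₂ : c f₂ ≠ c e := fun h => hef₂ (hc.eq_of_color_eq hwe hwf₂ hne h.symm)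
    simp only [Set.mem_insert_iff, Set.mem_singleton_iff] at hepair hpair₁ hpair₂
    refine hc.eq_of_color_eq hwf₁ hwf₂ (fun h => by simp [h] at hpair₁) ?_
    grind
  rw [← SimpleGraph.card_neighborFinset_eq_degree]
  calc _ ≤ _ := card_le_card hsub
    _ ≤ #T * 1 := card_biUnion_le_card_mul _ _ _ hfiber
    _ = #T := mul_one _

lemma IsProperPartialColoring.kempeGraph_degree_le_two (hc : G.IsProperPartialColoring c)
    (e : G.E) : (G.kempeGraph c i j).degree e ≤ 2 :=
  (hc.kempeGraph_degree_le e).trans <| (card_le_card fun w => by simp +contextual).trans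
    (card_mem_inc_le_two e)

lemma IsProperPartialColoring.kempeGraph_degree_le_one (hc : G.IsProperPartialColoring c)
    {w : G.V} (hwe : w ∈ G.inc e)
    (hend : ∀ f ≠ e, w ∈ G.inc f → c f ∉ ({some i, some j} : Set _)) :
    (G.kempeGraph c i j).degree e ≤ 1 := by
  refine (hc.kempeGraph_degree_le e).trans ?_
  have hsub : ({w' | w' ∈ G.inc e ∧ ∃ f ≠ e, w' ∈ G.inc f ∧ c f ∈ ({some i, some j} : Set _)} :
      Finset G.V) ⊆ ({w' | w' ∈ G.inc e} : Finset G.V).erase w := by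
    intro w' hw'
    obtain ⟨hw'e, f, hfe, hw'f, hfpair⟩ := (mem_filter.1 hw').2
    exact mem_erase.2 ⟨by rintro rfl; exact hend f hfe hw'f hfpair, by simp [hw'e]⟩
  have := card_mem_inc_le_two e
  have := card_erase_of_mem (mem_filter.2 ⟨mem_univ w, hwe⟩ : w ∈ ({w' | w' ∈ G.inc e} : Finset G.V))
  have := card_le_card hsub
  omega

end Kempe

section Maximal

variable {c : G.E → Option (Fin D)} {i j : Fin D} {e f g : G.E} {v u : G.V}

/-- If not, swapping the Kempe chain through `g`, which then avoids `v`, would free the color `j`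
at both ends of the uncolored edge `e`. -/
lemma IsMaximalColoring.reachable_of_misses (hc : G.IsMaximalColoring c) (he : c e = none)
    (hinc : G.inc e = s(v, u)) (hv : G.Misses c v j) (hu : G.Misses c u i) (hfv : v ∈ G.inc f)
    (hcf : c f = some i) (hgu : u ∈ G.inc g) (hcg : c g = some j) :
    (G.kempeGraph c i j).Reachable f g := by
  by_contra hfg
  have hv' : G.Misses (G.kempeSwap c i j g) v j := by
    intro a hva hca
    by_cases hra : (G.kempeGraph c i j).Reachable g a
    · rcases mem_pair_of_reachable (by simp [hcg]) hra with hai | haj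
      · exact hfg (hc.1 hva hfv hai hcf ▸ hra).symm
      · exact hv a hva haj
    · exact hv a hva (kempeSwap_of_not_reachable hra ▸ hca)
  exact hc.kempeSwap.not_misses_both (kempeSwap_eq_none_iff.2 he) hinc j
    ⟨hv', hc.1.misses_kempeSwap hu hgu hcg⟩

lemma IsMaximalColoring.disjoint_misses (hc : G.IsMaximalColoring c) (hv : G.degree v ≤ D)
    {e' : G.E} {u' : G.V} (he : c e = none) (he' : c e' = none) (hinc : G.inc e = s(v, u))
    (hinc' : G.inc e' = s(v, u')) (huu' : u ≠ u') :
    Disjoint ({x | G.Misses c u x} : Finset (Fin D)) ({x | G.Misses c u' x} : Finset (Fin D)) := by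
  refine disjoint_filter.2 fun i _ hu hu' => ?_
  obtain ⟨j, hj⟩ : ∃ j, G.Misses c v j := by
    have hpos : 0 < #{e | v ∈ G.inc e ∧ c e = none} :=
      card_pos.2 ⟨e, by simp [hinc, he]⟩
    obtain ⟨j, hj⟩ := card_pos.1 (hpos.trans_le (card_uncolored_le_card_misses c hv))
    exact ⟨j, (mem_filter.1 hj).2⟩
  have present {u : G.V} {x : Fin D} (h : ¬ G.Misses c u x) : ∃ a, u ∈ G.inc a ∧ c a = some x := by
    simpa [Misses] using h
  obtain ⟨f, hfv, hcf⟩ := present fun hvi => hc.not_misses_both he hinc i ⟨hvi, hu⟩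
  obtain ⟨g, hgu, hcg⟩ := present fun huj => hc.not_misses_both he hinc j ⟨hj, huj⟩
  obtain ⟨g', hgu', hcg'⟩ := present fun huj => hc.not_misses_both he' hinc' j ⟨hj, huj⟩
  have hr := hc.reachable_of_misses he hinc hj hu hfv hcf hgu hcg
  have hr' := hc.reachable_of_misses he' hinc' hj hu' hfv hcf hgu' hcg'
  have hfg {g : G.E} (hcg : c g = some j) : f ≠ g := by
    rintro rfl
    exact hj f hfv hcg
  have hend {u : G.V} {g : G.E} (hu : G.Misses c u i) (hgu : u ∈ G.inc g) (hcg : c g = some j) :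
      ∀ a ≠ g, u ∈ G.inc a → c a ∉ ({some i, some j} : Set _) := fun a hag hua => by
    rw [Set.pair_comm]
    exact hc.1.not_mem_pair hgu hcg hu hag hua
  have hf1 : (G.kempeGraph c i j).degree f ≤ 1 :=
    hc.1.kempeGraph_degree_le_one hfv fun a ha hva => hc.1.not_mem_pair hfv hcf hj ha hva
  -- `f`, `g` and `g'` would be three ends of the Kempe chain through `f`
  rcases SimpleGraph.eq_or_eq_or_eq_of_reachable_of_degree_le_one hc.1.kempeGraph_degree_le_two hf1
    (hc.1.kempeGraph_degree_le_one hgu (hend hu hgu hcg))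
    (hc.1.kempeGraph_degree_le_one hgu' (hend hu' hgu' hcg')) hr hr' with h | h | rfl
  · exact hfg hcg h
  · exact hfg hcg' h
  · -- `g` joins `u` and `u'`, so it is isolated in the Kempe graph
    have hg0 : (G.kempeGraph c i j).degree g = 0 := by
      refine Nat.le_zero.1 ((hc.1.kempeGraph_degree_le g).trans_eq (card_eq_zero.2 ?_))
      refine filter_eq_empty_iff.2 fun w _ ⟨hwg, a, hag, hwa, hapair⟩ => ?_
      rw [(Sym2.mem_and_mem_iff huu').1 ⟨hgu, hgu'⟩, Sym2.mem_iff] at hwg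
      rcases hwg with rfl | rfl
      exacts [hend hu hgu hcg a hag hwa hapair, hend hu' hgu' hcg a hag hwa hapair]
    exact SimpleGraph.not_reachable_of_right_degree_zero (hfg hcg) hg0 hr

lemma IsMaximalColoring.card_uncolored_le_card_not_misses (hc : G.IsMaximalColoring c)
    (hdeg : ∀ w, G.degree w ≤ D) (v : G.V) :
    #{e | v ∈ G.inc e ∧ c e = none} ≤ #{x | ¬ G.Misses c v x} := by
  set U : Finset G.E := {e | v ∈ G.inc e ∧ c e = none}
  have hother (e : G.E) : ∃ u, v ∈ G.inc e → G.inc e = s(v, u) :=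
    if h : v ∈ G.inc e then ⟨Sym2.Mem.other h, fun _ => (Sym2.other_spec h).symm⟩
    else ⟨v, fun h' => absurd h' h⟩
  choose ep hep using hother
  have hU {e : G.E} (he : e ∈ U) : G.inc e = s(v, ep e) ∧ c e = none := by
    obtain ⟨hve, hce⟩ := (mem_filter.1 he).2
    exact ⟨hep e hve, hce⟩
  have hfiber (u : G.V) :
      {e ∈ U | ep e = u} ⊆ ({e | u ∈ G.inc e ∧ c e = none} : Finset G.E) := by
    intro e he
    obtain ⟨heU, rfl⟩ := mem_filter.1 he
    simp [hU heU]
  have hdisj : (U.image ep : Set G.V).PairwiseDisjoint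
      fun u => ({x | G.Misses c u x} : Finset (Fin D)) := by
    intro u hu u' hu' huu'
    obtain ⟨e, he, rfl⟩ := mem_image.1 hu
    obtain ⟨e', he', rfl⟩ := mem_image.1 hu'
    exact hc.disjoint_misses (hdeg v) (hU he).2 (hU he').2 (hU he).1 (hU he').1 huu'
  have hpresent : ∀ u ∈ U.image ep,
      ({x | G.Misses c u x} : Finset (Fin D)) ⊆ ({x | ¬ G.Misses c v x} : Finset (Fin D)) := by
    intro u hu x hx
    obtain ⟨e, he, rfl⟩ := mem_image.1 hu
    refine mem_filter.2 ⟨mem_univ x, fun hvx => ?_⟩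
    exact hc.not_misses_both (hU he).2 (hU he).1 x ⟨hvx, (mem_filter.1 hx).2⟩
  calc #U = ∑ u ∈ U.image ep, #{e ∈ U | ep e = u} := card_eq_sum_card_image ep U
    _ ≤ ∑ u ∈ U.image ep, #{x | G.Misses c u x} := sum_le_sum fun u _ =>
      (card_le_card (hfiber u)).trans (card_uncolored_le_card_misses c (hdeg u))
    _ = #((U.image ep).biUnion fun u => {x | G.Misses c u x}) := (card_biUnion hdisj).symm
    _ ≤ #{x | ¬ G.Misses c v x} := card_le_card (biUnion_subset.2 hpresent)

theorem IsMaximalColoring.two_mul_ncard_uncolored_le (hc : G.IsMaximalColoring c)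
    (hdeg : ∀ w, G.degree w ≤ D) (v : G.V) :
    2 * {e | v ∈ G.inc e ∧ c e = none}.ncard ≤ G.degree v := by
  rw [← coe_filter_univ, Set.ncard_coe_finset, degree_eq_card_colored_add_card_uncolored c v]
  have := hc.card_uncolored_le_card_not_misses hdeg v
  have := card_not_misses_le_card_colored c v
  omega

end Maximal

end Mgraph

open Mgraph in
theorem resistanceTo_deleteVert_general (G : Mgraph) (v : G.V) :
    G.resistanceTo G.maxDegree ≤
      (G.deleteVerts {v}).resistanceTo G.maxDegree + G.degree v / 2 ∧
    (G.deleteVerts {v}).resistanceTo G.maxDegree + G.degree v / 2 ≤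
      (G.deleteVerts {v}).resistanceTo G.maxDegree + G.maxDegree / 2 := by
  refine ⟨?_, Nat.add_le_add_left (Nat.div_le_div_right (degree_le_maxDegree v)) _⟩
  obtain ⟨S, hS, hcolS⟩ := (G.deleteVerts {v}).exists_card_eq_resistanceTo G.maxDegree
  obtain ⟨c₁, hc₁, hc₁S⟩ := exists_isProperPartialColoring_of_edgeColorable hcolS
  obtain ⟨c₀, hc₀, hc₀c₁⟩ := exists_isProperPartialColoring_of_deleteVerts hc₁
  obtain ⟨c, hc, hcc₀⟩ := exists_isMaximalColoring hc₀
  have hU := hc.two_mul_ncard_uncolored_le degree_le_maxDegree v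
  set U : Set G.E := {e | v ∈ G.inc e ∧ c e = none}
  have hsub : {e | c e = none} ⊆ Subtype.val '' S ∪ U := by
    intro e he
    by_cases hev : ∀ w ∈ G.inc e, w ∉ ({v} : Set G.V)
    · exact Or.inl ⟨⟨e, hev⟩, hc₁S _ (hc₀c₁ e hev ▸ hcc₀ he), rfl⟩
    · push Not at hev
      obtain ⟨w, hw, rfl⟩ := hev
      exact Or.inr ⟨hw, he⟩
  calc G.resistanceTo G.maxDegree ≤ Nat.card {e | c e = none} :=
        resistanceTo_le hc.1.edgeColorable_deleteEdges
    _ ≤ (Subtype.val '' S).ncard + U.ncard := by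
        rw [Nat.card_coe_set_eq]
        exact (Set.ncard_le_ncard hsub).trans (Set.ncard_union_le _ _)
    _ ≤ _ := by
        have hSimg : (Subtype.val '' S).ncard = Nat.card S :=
          (Set.ncard_image_of_injective S Subtype.val_injective).trans (Nat.card_coe_set_eq S).symm
        rw [hSimg, hS]
        omega

open Mgraph in
/-- Let `G` be a finite loopless multigraph, `Δ = Δ(G)` and `v` a vertex of `G`. Then
`r_e^Δ(G) ≤ r_e^Δ(G − v) + ⌊d_G(v)/2⌋ ≤ r_e^Δ(G − v) + ⌊Δ/2⌋`, where `r_e^Δ(H)` is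
the minimum number of edges whose removal from `H` leaves a `Δ`-edge-colorable graph. -/
theorem resistanceTo_deleteVert (G : Mgraph) (hG : G.Loopless) (v : G.V) :
    G.resistanceTo G.maxDegree ≤
      (G.deleteVerts {v}).resistanceTo G.maxDegree + G.degree v / 2 ∧
    (G.deleteVerts {v}).resistanceTo G.maxDegree + G.degree v / 2 ≤
      (G.deleteVerts {v}).resistanceTo G.maxDegree + G.maxDegree / 2 :=
  resistanceTo_deleteVert_general G v
end
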